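/- Let u_1,...,u_r ∈ R^n be vectors with pairwise disjoint supports forming the columns of U. Then for any q ≥ 2, ‖UUᵀ‖_{q→q*} = ‖U‖_{2→q*}² ≤ r^{1−2/q} · (max_ℓ ‖u_ℓ‖_{q*})². -/

import Mathlib

open scoped BigOperators
open Matrix

noncomputable def lpNorm {n : ℕ} (p : ℝ) (v : Fin n → ℝ) : ℝ :=
  (∑ i, |v i| ^ p) ^ (1 / p)

noncomputable def opNorm {m n : ℕ} (p q : ℝ) (A : Matrix (Fin m) (Fin n) ℝ) : ℝ :=
  sSup {t : ℝ | ∃ v : Fin n → ℝ, v ≠ 0 ∧ t = lpNorm q (A.mulVec v) / lpNorm p v}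

noncomputable def frobSq {m n : ℕ} (A : Matrix (Fin m) (Fin n) ℝ) : ℝ :=
  ∑ i, ∑ j, (A i j) ^ 2

/-!
Hölder duality gives `‖Uᵀv‖₂² = ⟨v, UUᵀv⟩ ≤ ‖v‖_q ‖UUᵀv‖_{q*}`. With `M = ‖U‖_{2→q*}` this yields
`‖Uᵀv‖₂ ≤ M ‖v‖_q`, hence `‖UUᵀ‖_{q→q*} ≤ M²`. Conversely, pairing `Ux` with a vector `v` that
attains equality in Hölder's inequality gives `‖v‖_q ‖Ux‖_{q*} = ⟨Uᵀv, x⟩ ≤ √‖UUᵀ‖ ‖v‖_q ‖x‖₂`.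

For the bound, disjoint supports make `|(Ux)ᵢ|^{q*} = Σ_ℓ |u_{ℓ,i}|^{q*} |x_ℓ|^{q*}`, so
`‖Ux‖_{q*} ≤ (max_ℓ ‖u_ℓ‖_{q*}) ‖x‖_{q*}`, and `‖x‖_{q*} ≤ r^{1/q* - 1/2} ‖x‖₂` because `q* ≤ 2`.
-/
section LpNorm

variable {n : ℕ}

lemma lpNorm_nonneg (p : ℝ) (v : Fin n → ℝ) : 0 ≤ lpNorm p v :=
  Real.rpow_nonneg (Finset.sum_nonneg fun _ _ => Real.rpow_nonneg (abs_nonneg _) _) _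

lemma lpNorm_pos (p : ℝ) {v : Fin n → ℝ} (hv : v ≠ 0) : 0 < lpNorm p v := by
  obtain ⟨i, hi⟩ := Function.ne_iff.mp hv
  refine Real.rpow_pos_of_pos (Finset.sum_pos' (fun _ _ => Real.rpow_nonneg (abs_nonneg _) _)
    ⟨i, Finset.mem_univ i, Real.rpow_pos_of_pos (abs_pos.mpr hi) p⟩) _

lemma lpNorm_zero {p : ℝ} (hp : p ≠ 0) : lpNorm p (0 : Fin n → ℝ) = 0 := by
  simp [lpNorm, Real.zero_rpow hp, Real.zero_rpow (inv_ne_zero hp)]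

lemma lpNorm_rpow {p : ℝ} (hp : p ≠ 0) (v : Fin n → ℝ) :
    lpNorm p v ^ p = ∑ i, |v i| ^ p := by
  rw [lpNorm, one_div, Real.rpow_inv_rpow (Finset.sum_nonneg fun _ _ => by positivity) hp]

lemma lpNorm_two_sq (v : Fin n → ℝ) : lpNorm 2 v ^ 2 = v ⬝ᵥ v := by
  rw [← Real.rpow_natCast, Nat.cast_ofNat, lpNorm_rpow two_ne_zero]
  simp only [dotProduct, Real.rpow_two, sq, abs_mul_abs_self]

lemma lpNorm_eq_norm_toLp {p : ℝ} (hp : 0 < p) (v : Fin n → ℝ) :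
    lpNorm p v = ‖WithLp.toLp (ENNReal.ofReal p) v‖ := by
  rw [PiLp.norm_eq_sum (by rwa [ENNReal.toReal_ofReal hp.le]), ENNReal.toReal_ofReal hp.le]
  simp [lpNorm, Real.norm_eq_abs]

lemma dotProduct_le_lpNorm_mul_lpNorm {p q : ℝ} (hpq : p.HolderConjugate q) (v w : Fin n → ℝ) :
    v ⬝ᵥ w ≤ lpNorm p v * lpNorm q w :=
  Real.inner_le_Lp_mul_Lq Finset.univ v w hpq

lemma lpNorm_le_card_rpow_mul_lpNorm {s t : ℝ} (hs : 0 < s) (hst : s ≤ t) (x : Fin n → ℝ) :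
    lpNorm s x ≤ (n : ℝ) ^ (1 / s - 1 / t) * lpNorm t x := by
  have ht : 0 < t := hs.trans_le hst
  have hpow : (∑ i, |x i| ^ s) ^ (t / s) ≤ (n : ℝ) ^ (t / s - 1) * ∑ i, |x i| ^ t := by
    have := Real.rpow_sum_le_const_mul_sum_rpow_of_nonneg Finset.univ
      (f := fun i => |x i| ^ s) ((one_le_div hs).mpr hst) (fun _ _ => by positivity)
    simpa [← Real.rpow_mul (abs_nonneg _), mul_div_cancel₀ t hs.ne'] using this
  calc lpNorm s x = ((∑ i, |x i| ^ s) ^ (t / s)) ^ (1 / t) := by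
        rw [lpNorm, ← Real.rpow_mul (by positivity)]
        congr 1
        field_simp
    _ ≤ ((n : ℝ) ^ (t / s - 1) * ∑ i, |x i| ^ t) ^ (1 / t) := by gcongr
    _ = (n : ℝ) ^ (1 / s - 1 / t) * lpNorm t x := by
        rw [Real.mul_rpow (by positivity) (by positivity), ← Real.rpow_mul (by positivity), lpNorm]
        congr 2
        field_simp

end LpNorm

section OpNorm

variable {m n : ℕ}

lemma opNorm_nonneg (p q : ℝ) (A : Matrix (Fin m) (Fin n) ℝ) : 0 ≤ opNorm p q A :=
  Real.sSup_nonneg <| by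
    rintro t ⟨v, -, rfl⟩
    exact div_nonneg (lpNorm_nonneg _ _) (lpNorm_nonneg _ _)

lemma opNorm_le_bound {p q C : ℝ} {A : Matrix (Fin m) (Fin n) ℝ} (hC : 0 ≤ C)
    (h : ∀ v, lpNorm q (A *ᵥ v) ≤ C * lpNorm p v) : opNorm p q A ≤ C :=
  Real.sSup_le (by rintro t ⟨v, -, rfl⟩; exact div_le_of_le_mul₀ (lpNorm_nonneg _ _) hC (h v)) hC

lemma exists_lpNorm_mulVec_le {p q : ℝ} (hp : 1 ≤ p) (hq : 1 ≤ q) (A : Matrix (Fin m) (Fin n) ℝ) :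
    ∃ C, ∀ v, lpNorm q (A *ᵥ v) ≤ C * lpNorm p v := by
  have : Fact (1 ≤ ENNReal.ofReal p) := ⟨ENNReal.one_le_ofReal.mpr hp⟩
  have : Fact (1 ≤ ENNReal.ofReal q) := ⟨ENNReal.one_le_ofReal.mpr hq⟩
  let L := LinearMap.toContinuousLinearMap (toLpLin (ENNReal.ofReal p) (ENNReal.ofReal q) A)
  refine ⟨‖L‖, fun v => ?_⟩
  simpa [lpNorm_eq_norm_toLp (one_pos.trans_le hp), lpNorm_eq_norm_toLp (one_pos.trans_le hq), L]
    using L.le_opNorm (WithLp.toLp _ v)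

lemma lpNorm_mulVec_le_opNorm_mul {p q : ℝ} (hp : 1 ≤ p) (hq : 1 ≤ q)
    (A : Matrix (Fin m) (Fin n) ℝ) (v : Fin n → ℝ) :
    lpNorm q (A *ᵥ v) ≤ opNorm p q A * lpNorm p v := by
  rcases eq_or_ne v 0 with rfl | hv
  · rw [mulVec_zero, lpNorm_zero (by linarith), lpNorm_zero (by linarith), mul_zero]
  -- `opNorm` is an `sSup`, which is junk (`0`) unless the ratios are bounded.
  obtain ⟨C, hC⟩ := exists_lpNorm_mulVec_le hp hq A
  have hbdd :
      BddAbove {t : ℝ | ∃ v : Fin n → ℝ, v ≠ 0 ∧ t = lpNorm q (A.mulVec v) / lpNorm p v} := by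
    refine ⟨C, ?_⟩
    rintro t ⟨w, hw, rfl⟩
    exact (div_le_iff₀ (lpNorm_pos p hw)).mpr (hC w)
  rw [← div_le_iff₀ (lpNorm_pos p hv)]
  exact le_csSup hbdd ⟨v, hv, rfl⟩

end OpNorm

lemma exists_dotProduct_eq_lpNorm_mul_lpNorm {n : ℕ} {q qs : ℝ} (hqq : q.HolderConjugate qs)
    {w : Fin n → ℝ} (hw : w ≠ 0) : ∃ v ≠ 0, v ⬝ᵥ w = lpNorm q v * lpNorm qs w := by
  set v : Fin n → ℝ := fun i => w i * |w i| ^ (qs - 2)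
  have hvw : ∀ i, v i * w i = |w i| ^ qs := by
    intro i
    rcases eq_or_ne (w i) 0 with h | h
    · simp [v, h, Real.zero_rpow hqq.symm.ne_zero]
    · calc v i * w i = |w i| ^ (2 : ℝ) * |w i| ^ (qs - 2) := by
            simp only [v, Real.rpow_two, sq_abs]; ring
        _ = |w i| ^ qs := by rw [← Real.rpow_add (abs_pos.mpr h)]; ring_nf
  have hv : ∀ i, |v i| ^ q = |w i| ^ qs := by
    intro i
    rcases eq_or_ne (w i) 0 with h | h
    · simp [v, h, Real.zero_rpow hqq.ne_zero, Real.zero_rpow hqq.symm.ne_zero]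
    · have : |v i| = |w i| ^ (qs - 1) := by
        rw [abs_mul, abs_of_nonneg (Real.rpow_nonneg (abs_nonneg (w i)) _),
          ← Real.rpow_one_add' (abs_nonneg _)] <;>
          ring_nf
        linarith [hqq.symm.sub_one_pos]
      rw [this, ← Real.rpow_mul (abs_nonneg _), hqq.symm.sub_one_mul_conj]
  set W := ∑ i, |w i| ^ qs
  have hW : 0 < W := by
    simpa only [W, lpNorm_rpow hqq.symm.ne_zero] using Real.rpow_pos_of_pos (lpNorm_pos qs hw) qs
  have hdot : v ⬝ᵥ w = W := Finset.sum_congr rfl fun i _ => hvw i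
  refine ⟨v, fun h0 => by simp [h0] at hdot; linarith, ?_⟩
  calc v ⬝ᵥ w = W ^ (1 / q + 1 / qs) := by
        rw [hdot, hqq.one_div_add_one_div, one_div_one, Real.rpow_one]
    _ = lpNorm q v * lpNorm qs w := by
        rw [Real.rpow_add hW, lpNorm, lpNorm, Finset.sum_congr rfl fun i _ => hv i]

section MulTranspose

variable {n r : ℕ} {q qs : ℝ}

lemma lpNorm_transpose_mulVec_sq_le (hqq : q.HolderConjugate qs)
    (U : Matrix (Fin n) (Fin r) ℝ) (v : Fin n → ℝ) :
    lpNorm 2 (Uᵀ *ᵥ v) ^ 2 ≤ lpNorm q v * lpNorm qs ((U * Uᵀ) *ᵥ v) := by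
  calc lpNorm 2 (Uᵀ *ᵥ v) ^ 2 = v ⬝ᵥ (U * Uᵀ) *ᵥ v := by
        rw [lpNorm_two_sq, ← mulVec_mulVec, dotProduct_mulVec v U, mulVec_transpose]
    _ ≤ lpNorm q v * lpNorm qs ((U * Uᵀ) *ᵥ v) := dotProduct_le_lpNorm_mul_lpNorm hqq _ _

lemma lpNorm_transpose_mulVec_le (hqq : q.HolderConjugate qs)
    (U : Matrix (Fin n) (Fin r) ℝ) (v : Fin n → ℝ) :
    lpNorm 2 (Uᵀ *ᵥ v) ≤ opNorm 2 qs U * lpNorm q v := by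
  rcases (lpNorm_nonneg 2 (Uᵀ *ᵥ v)).eq_or_lt with hx | hx
  · rw [← hx]
    exact mul_nonneg (opNorm_nonneg 2 qs U) (lpNorm_nonneg q v)
  set x := lpNorm 2 (Uᵀ *ᵥ v)
  refine le_of_mul_le_mul_right ?_ hx
  calc x * x = x ^ 2 := (sq x).symm
    _ ≤ lpNorm q v * lpNorm qs (U *ᵥ (Uᵀ *ᵥ v)) := by
        rw [mulVec_mulVec]; exact lpNorm_transpose_mulVec_sq_le hqq U v
    _ ≤ lpNorm q v * (opNorm 2 qs U * x) := by
        gcongr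
        · exact lpNorm_nonneg q v
        · exact lpNorm_mulVec_le_opNorm_mul one_le_two hqq.symm.lt.le U _
    _ = opNorm 2 qs U * lpNorm q v * x := by ring

lemma lpNorm_mulVec_le_sqrt_opNorm_mul (hqq : q.HolderConjugate qs)
    (U : Matrix (Fin n) (Fin r) ℝ) (x : Fin r → ℝ) :
    lpNorm qs (U *ᵥ x) ≤ √(opNorm q qs (U * Uᵀ)) * lpNorm 2 x := by
  set N := opNorm q qs (U * Uᵀ)
  rcases eq_or_ne (U *ᵥ x) 0 with h0 | hw
  · rw [h0, lpNorm_zero hqq.symm.ne_zero]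
    exact mul_nonneg (Real.sqrt_nonneg N) (lpNorm_nonneg 2 x)
  obtain ⟨v, hv, hvw⟩ := exists_dotProduct_eq_lpNorm_mul_lpNorm hqq hw
  have hUt : lpNorm 2 (Uᵀ *ᵥ v) ≤ √N * lpNorm q v := by
    have hsq := lpNorm_transpose_mulVec_sq_le hqq U v
    have hN := lpNorm_mulVec_le_opNorm_mul hqq.lt.le hqq.symm.lt.le (U * Uᵀ) v
    rw [← Real.sqrt_sq (lpNorm_nonneg 2 _), ← Real.sqrt_sq (lpNorm_nonneg q v),
      ← Real.sqrt_mul (opNorm_nonneg q qs _)]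
    exact Real.sqrt_le_sqrt (by nlinarith [lpNorm_nonneg q v])
  refine le_of_mul_le_mul_left ?_ (lpNorm_pos q hv)
  calc lpNorm q v * lpNorm qs (U *ᵥ x) = (Uᵀ *ᵥ v) ⬝ᵥ x := by
        rw [← hvw, dotProduct_mulVec, mulVec_transpose]
    _ ≤ lpNorm 2 (Uᵀ *ᵥ v) * lpNorm 2 x := dotProduct_le_lpNorm_mul_lpNorm .two_two _ _
    _ ≤ (√N * lpNorm q v) * lpNorm 2 x := by gcongr; exact lpNorm_nonneg 2 x
    _ = lpNorm q v * (√N * lpNorm 2 x) := by ring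

theorem opNorm_mul_transpose_self (hqq : q.HolderConjugate qs) (U : Matrix (Fin n) (Fin r) ℝ) :
    opNorm q qs (U * Uᵀ) = opNorm 2 qs U ^ 2 := by
  set M := opNorm 2 qs U
  apply le_antisymm
  · refine opNorm_le_bound (sq_nonneg M) fun v => ?_
    calc lpNorm qs ((U * Uᵀ) *ᵥ v) = lpNorm qs (U *ᵥ (Uᵀ *ᵥ v)) := by rw [mulVec_mulVec]
      _ ≤ M * lpNorm 2 (Uᵀ *ᵥ v) :=
          lpNorm_mulVec_le_opNorm_mul one_le_two hqq.symm.lt.le U _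
      _ ≤ M * (M * lpNorm q v) := by
          gcongr
          · exact opNorm_nonneg 2 qs U
          · exact lpNorm_transpose_mulVec_le hqq U v
      _ = M ^ 2 * lpNorm q v := by ring
  · have hM : M ≤ √(opNorm q qs (U * Uᵀ)) :=
      opNorm_le_bound (Real.sqrt_nonneg _) (lpNorm_mulVec_le_sqrt_opNorm_mul hqq U)
    calc M ^ 2 ≤ √(opNorm q qs (U * Uᵀ)) ^ 2 := by gcongr; exact opNorm_nonneg 2 qs U
      _ = opNorm q qs (U * Uᵀ) := Real.sq_sqrt (opNorm_nonneg q qs _)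

end MulTranspose

section DisjointColumns

lemma abs_sum_rpow_of_pairwise_eq_zero {ι : Type*} [Fintype ι] {s : ℝ} (hs : s ≠ 0) (f : ι → ℝ)
    (hf : ∀ ℓ ℓ', ℓ ≠ ℓ' → f ℓ = 0 ∨ f ℓ' = 0) : |∑ ℓ, f ℓ| ^ s = ∑ ℓ, |f ℓ| ^ s := by
  by_cases hz : ∀ ℓ, f ℓ = 0
  · simp [hz, Real.zero_rpow hs]
  obtain ⟨ℓ₀, hℓ₀⟩ := not_forall.mp hz
  have hother : ∀ ℓ ≠ ℓ₀, f ℓ = 0 := fun ℓ hℓ => (hf ℓ ℓ₀ hℓ).resolve_right hℓ₀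
  rw [Finset.sum_eq_single_of_mem ℓ₀ (Finset.mem_univ _) fun ℓ _ hℓ => hother ℓ hℓ,
    Finset.sum_eq_single_of_mem ℓ₀ (Finset.mem_univ _) fun ℓ _ hℓ => by
      rw [hother ℓ hℓ, abs_zero, Real.zero_rpow hs]]

variable {n r : ℕ}

lemma lpNorm_mulVec_le_of_disjoint {s : ℝ} (hs : 0 < s) (U : Matrix (Fin n) (Fin r) ℝ)
    (hU : ∀ ℓ ℓ' : Fin r, ℓ ≠ ℓ' → ∀ i, U i ℓ = 0 ∨ U i ℓ' = 0) (x : Fin r → ℝ) :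
    lpNorm s (U *ᵥ x) ≤ (⨆ ℓ, lpNorm s (fun i => U i ℓ)) * lpNorm s x := by
  set A := ⨆ ℓ, lpNorm s (fun i => U i ℓ)
  have hA : 0 ≤ A := Real.iSup_nonneg fun ℓ => lpNorm_nonneg _ _
  rw [← Real.rpow_le_rpow_iff (lpNorm_nonneg _ _) (mul_nonneg hA (lpNorm_nonneg _ _)) hs,
    Real.mul_rpow hA (lpNorm_nonneg _ _), lpNorm_rpow hs.ne', lpNorm_rpow hs.ne', Finset.mul_sum]
  calc ∑ i, |(U *ᵥ x) i| ^ s = ∑ i, ∑ ℓ, |U i ℓ| ^ s * |x ℓ| ^ s := by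
        refine Finset.sum_congr rfl fun i _ => ?_
        rw [mulVec, dotProduct, abs_sum_rpow_of_pairwise_eq_zero hs.ne']
        · simp only [abs_mul, Real.mul_rpow (abs_nonneg _) (abs_nonneg _)]
        · intro ℓ ℓ' hℓ
          rcases hU ℓ ℓ' hℓ i with h | h <;> simp [h]
    _ = ∑ ℓ, lpNorm s (fun i => U i ℓ) ^ s * |x ℓ| ^ s := by
        rw [Finset.sum_comm]
        simp only [← Finset.sum_mul, lpNorm_rpow hs.ne']
    _ ≤ ∑ ℓ, A ^ s * |x ℓ| ^ s := by
        gcongr with ℓ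
        · exact lpNorm_nonneg _ _
        exact le_ciSup (Set.finite_range fun ℓ => lpNorm s (fun i => U i ℓ)).bddAbove ℓ

lemma opNorm_le_of_disjoint {s t : ℝ} (hs : 0 < s) (hst : s ≤ t) (U : Matrix (Fin n) (Fin r) ℝ)
    (hU : ∀ ℓ ℓ' : Fin r, ℓ ≠ ℓ' → ∀ i, U i ℓ = 0 ∨ U i ℓ' = 0) :
    opNorm t s U ≤ (r : ℝ) ^ (1 / s - 1 / t) * ⨆ ℓ, lpNorm s (fun i => U i ℓ) := by
  set A := ⨆ ℓ, lpNorm s (fun i => U i ℓ)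
  have hA : 0 ≤ A := Real.iSup_nonneg fun ℓ => lpNorm_nonneg _ _
  refine opNorm_le_bound (by positivity) fun x => ?_
  calc lpNorm s (U *ᵥ x) ≤ A * lpNorm s x := lpNorm_mulVec_le_of_disjoint hs U hU x
    _ ≤ A * ((r : ℝ) ^ (1 / s - 1 / t) * lpNorm t x) := by
        gcongr
        exact lpNorm_le_card_rpow_mul_lpNorm hs hst x
    _ = (r : ℝ) ^ (1 / s - 1 / t) * A * lpNorm t x := by ring

end DisjointColumns

theorem stmt12 {n r : ℕ} (q qs : ℝ) (hq : 2 ≤ q) (hconj : 1 / q + 1 / qs = 1)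
    (U : Matrix (Fin n) (Fin r) ℝ)
    (hdisj : ∀ ℓ ℓ' : Fin r, ℓ ≠ ℓ' → ∀ i, U i ℓ = 0 ∨ U i ℓ' = 0) :
    opNorm q qs (U * Uᵀ) = (opNorm 2 qs U) ^ 2 ∧
    (opNorm 2 qs U) ^ 2 ≤
      (r : ℝ) ^ (1 - 2 / q) * (⨆ ℓ : Fin r, lpNorm qs (fun i => U i ℓ)) ^ 2 := by
  have hqq : q.HolderConjugate qs :=
    Real.holderConjugate_iff.mpr ⟨by linarith, by simpa only [one_div] using hconj⟩
  have hqs : qs ≤ 2 := by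
    rw [← one_div_le_one_div two_pos hqq.symm.pos]
    linarith [one_div_le_one_div_of_le two_pos hq]
  refine ⟨opNorm_mul_transpose_self hqq U, ?_⟩
  calc opNorm 2 qs U ^ 2
      ≤ ((r : ℝ) ^ (1 / qs - 1 / 2) * ⨆ ℓ, lpNorm qs (fun i => U i ℓ)) ^ 2 := by
        gcongr
        · exact opNorm_nonneg 2 qs U
        · exact opNorm_le_of_disjoint hqq.symm.pos hqs U hdisj
    _ = (r : ℝ) ^ (1 - 2 / q) * (⨆ ℓ, lpNorm qs (fun i => U i ℓ)) ^ 2 := by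
        rw [mul_pow, ← Real.rpow_natCast, ← Real.rpow_mul (Nat.cast_nonneg r)]
        congr 2
        linear_combination (2 : ℝ) * hconj
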